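/- For the vacuum-type parabolic 𝒫 = span{W^n_k : n+k ≥ 0, k ∈ ℤ, n odd positive}, where W^n_k = -(1/2)(t^{k+n}∂_t^n + (-1)^{n+1}∂_t^n t^{k+n}), the set 𝒫 is closed under the Lie bracket of differential operators, i.e., 𝒫 is a Lie subalgebra of 𝒟⁺. -/

import Mathlib

/-!
Write `W^n_k = t^k w_{n,k}(D)` with `D = t ∂_t`. The symbol `w_{n,k}` is odd under the
reflection `x ↦ -x - (k + 1)`, and when `n + k ≥ 0` it vanishes at the integers
`0, …, -k - 1`. Both properties pass to the symbol of `[t^j f(D), t^k g(D)]`, which is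
`t^{j+k} (f(D + k) g(D) - g(D + j) f(D))`. Conversely, a polynomial with both properties for
the index `l` has odd degree `e` with `e + l ≥ 0`, so subtracting a multiple of `w_{e,l}`
lowers its degree and induction writes it as a combination of the `w_{p,l}` with `p` odd and
`p + l ≥ 0`.
-/

open Polynomial

noncomputable abbrev DOp := ℤ →₀ Polynomial ℂ

/-- `(t^k f(D)) ⬝ (t^l g(D)) = t^{k+l} f(D+l) g(D)`. -/
noncomputable def DOp.mul (a b : DOp) : DOp :=
  a.sum fun k f => b.sum fun l g =>
    Finsupp.single (k + l) (f.comp (X + C (l : ℂ)) * g)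

/-- The commutator bracket of differential operators. -/
noncomputable def DOp.lieb (a b : DOp) : DOp := DOp.mul a b - DOp.mul b a

/-- The falling factorial `[x]_n = x(x-1)⋯(x-n+1)`. -/
noncomputable def falling (n : ℕ) : Polynomial ℂ :=
  ∏ i ∈ Finset.range n, (X - C (i : ℂ))

/-- `W^n_k = -(1/2)(t^{k+n}∂_t^n + (-1)^{n+1}∂_t^n t^{k+n})
          = -(1/2) t^k ([D]_n - [-D-k-1]_n)` for `n` odd. -/
noncomputable def Wnk (n : ℕ) (k : ℤ) : DOp :=
  Finsupp.single k
    ((-(1 / 2 : ℂ)) • (falling n - (falling n).comp (-X - C ((k : ℂ) + 1))))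

section Polynomials

variable {R : Type*} [CommRing R]

theorem natDegree_neg_X_sub_C [Nontrivial R] (a : R) : (-X - C a).natDegree = 1 := by
  rw [← neg_add', natDegree_neg, natDegree_X_add_C]

theorem leadingCoeff_neg_X_sub_C [Nontrivial R] (a : R) : (-X - C a).leadingCoeff = -1 := by
  rw [← neg_add', leadingCoeff_neg, (monic_X_add_C a).leadingCoeff]

theorem eval_neg_sub_of_comp_eq_neg {P : R[X]} {a : R} (h : P.comp (-X - C a) = -P) (x : R) :
    P.eval (-x - a) = -P.eval x := by
  simpa using congrArg (eval x) h

theorem odd_natDegree_of_comp_neg_X_sub_C_eq_neg [NoZeroDivisors R] (h : (-1 : R) ≠ 1)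
    {P : R[X]} (hP : P ≠ 0) {a : R} (hodd : P.comp (-X - C a) = -P) : Odd P.natDegree := by
  have : Nontrivial R := ⟨⟨-1, 1, h⟩⟩
  have hlc := leadingCoeff_comp (p := P) (q := -X - C a)
    (by rw [natDegree_neg_X_sub_C]; exact one_ne_zero)
  rw [hodd, leadingCoeff_neg, leadingCoeff_neg_X_sub_C, ← neg_one_mul, mul_comm] at hlc
  exact (neg_one_pow_eq_neg_one_iff_odd h).1
    (mul_left_cancel₀ (leadingCoeff_ne_zero.2 hP) hlc).symm

theorem natDegree_add_nonneg_of_eval_intCast_eq_zero [IsDomain R] [CharZero R] {P : R[X]}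
    (hP : P ≠ 0) {l : ℤ} (hvan : ∀ b : ℤ, 0 ≤ b → b + l < 0 → P.eval (b : R) = 0) :
    0 ≤ (P.natDegree : ℤ) + l := by
  by_contra! hlt
  refine hP (eq_zero_of_natDegree_lt_card_of_eval_eq_zero P
    (f := fun b : Finset.Ico (0 : ℤ) (-l) => ((b : ℤ) : R))
    (Int.cast_injective.comp Subtype.val_injective) (fun ⟨b, hb⟩ => ?_) ?_)
  · rw [Finset.mem_Ico] at hb
    exact hvan b hb.1 (by omega)
  · rw [Fintype.card_coe, Int.card_Ico]
    omega

end Polynomials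

theorem falling_eq_descPochhammer (n : ℕ) : falling n = descPochhammer ℂ n :=
  Polynomial.funext fun x => by rw [descPochhammer_eval_eq_prod_range, falling, eval_prod]; simp

theorem monic_falling (n : ℕ) : (falling n).Monic :=
  falling_eq_descPochhammer n ▸ monic_descPochhammer ℂ n

theorem natDegree_falling (n : ℕ) : (falling n).natDegree = n :=
  falling_eq_descPochhammer n ▸ descPochhammer_natDegree ℂ n

theorem falling_eval_intCast_eq_zero {n : ℕ} {b : ℤ} (h0 : 0 ≤ b) (hb : b < n) :
    (falling n).eval (b : ℂ) = 0 := by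
  lift b to ℕ using h0
  rw [Int.cast_natCast, falling_eq_descPochhammer]
  exact descPochhammer_eval_coe_nat_of_lt (by omega)

noncomputable def wSymbol (n : ℕ) (k : ℤ) : ℂ[X] :=
  (-(1 / 2 : ℂ)) • (falling n - (falling n).comp (-X - C ((k : ℂ) + 1)))

theorem Wnk_eq_single (n : ℕ) (k : ℤ) : Wnk n k = Finsupp.single k (wSymbol n k) := rfl

theorem wSymbol_comp (n : ℕ) (k : ℤ) :
    (wSymbol n k).comp (-X - C ((k : ℂ) + 1)) = -wSymbol n k := by
  have hσσ : (-X - C ((k : ℂ) + 1)).comp (-X - C ((k : ℂ) + 1)) = X := by simp [sub_comp]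
  rw [wSymbol, smul_comp, sub_comp, comp_assoc, hσσ, comp_X, ← smul_neg, neg_sub]

theorem natDegree_wSymbol_le (n : ℕ) (k : ℤ) : (wSymbol n k).natDegree ≤ n := by
  refine (natDegree_smul_le _ _).trans
    ((natDegree_sub_le _ _).trans (max_le (natDegree_falling n).le ?_))
  rw [natDegree_comp, natDegree_neg_X_sub_C, natDegree_falling, mul_one]

theorem wSymbol_coeff_self {n : ℕ} (hn : Odd n) (k : ℤ) : (wSymbol n k).coeff n = -1 := by
  have hcoeff : (falling n).coeff n = 1 := by
    simpa only [natDegree_falling] using (monic_falling n).coeff_natDegree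
  have hcomp : ((falling n).comp (-X - C ((k : ℂ) + 1))).coeff n = -1 := by
    have hlc := leadingCoeff_comp (p := falling n) (q := -X - C ((k : ℂ) + 1))
      (by rw [natDegree_neg_X_sub_C]; exact one_ne_zero)
    rw [leadingCoeff, natDegree_comp, natDegree_neg_X_sub_C, natDegree_falling, mul_one] at hlc
    rw [hlc, (monic_falling n).leadingCoeff, leadingCoeff_neg_X_sub_C, hn.neg_one_pow, one_mul]
  rw [wSymbol, coeff_smul, coeff_sub, hcoeff, hcomp]
  norm_num

/-- The polynomials `P` for which `t^l P(D)` lies in the parabolic. -/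
def parabolicSymbols (l : ℤ) : Submodule ℂ ℂ[X] where
  carrier := {P | P.comp (-X - C ((l : ℂ) + 1)) = -P ∧
    ∀ b : ℤ, 0 ≤ b → b + l < 0 → P.eval (b : ℂ) = 0}
  add_mem' := by
    rintro P Q ⟨hP, hPv⟩ ⟨hQ, hQv⟩
    refine ⟨by rw [add_comp, hP, hQ, neg_add], fun b h0 hb => ?_⟩
    rw [eval_add, hPv b h0 hb, hQv b h0 hb, add_zero]
  zero_mem' := ⟨by simp, fun _ _ _ => eval_zero⟩
  smul_mem' := by
    rintro c P ⟨hP, hPv⟩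
    refine ⟨by rw [smul_comp, hP, smul_neg], fun b h0 hb => ?_⟩
    rw [eval_smul, hPv b h0 hb, smul_zero]

theorem wSymbol_mem_parabolicSymbols {n : ℕ} {k : ℤ} (hnk : 0 ≤ (n : ℤ) + k) :
    wSymbol n k ∈ parabolicSymbols k := by
  refine ⟨wSymbol_comp n k, fun b h0 hb => ?_⟩
  have hσb : (-X - C ((k : ℂ) + 1)).eval (b : ℂ) = ((-b - k - 1 : ℤ) : ℂ) := by simp; ring
  rw [wSymbol, eval_smul, eval_sub, eval_comp, hσb, falling_eval_intCast_eq_zero h0 (by omega),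
    falling_eval_intCast_eq_zero (by omega) (by omega), sub_zero, smul_zero]

theorem parabolicSymbols_le_span (l : ℤ) :
    parabolicSymbols l ≤
      Submodule.span ℂ {q | ∃ p : ℕ, Odd p ∧ 0 ≤ (p : ℤ) + l ∧ q = wSymbol p l} := by
  intro P hP
  induction hdeg : P.natDegree using Nat.strong_induction_on generalizing P with
  | _ e ih =>
  by_cases hP0 : P = 0
  · exact hP0 ▸ Submodule.zero_mem _
  have he : Odd e := hdeg ▸ odd_natDegree_of_comp_neg_X_sub_C_eq_neg (by norm_num) hP0 hP.1
  have hel : 0 ≤ (e : ℤ) + l := hdeg ▸ natDegree_add_nonneg_of_eval_intCast_eq_zero hP0 hP.2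
  have hw : wSymbol e l ∈ parabolicSymbols l := wSymbol_mem_parabolicSymbols hel
  set Q := P + P.leadingCoeff • wSymbol e l
  have hQe : Q.coeff e = 0 := by
    rw [coeff_add, coeff_smul, wSymbol_coeff_self he, leadingCoeff, hdeg, smul_eq_mul, mul_neg_one,
      add_neg_cancel]
  have hQdeg : Q.natDegree < e := by
    have hle : Q.natDegree ≤ e := natDegree_add_le_of_degree_le hdeg.le
      ((natDegree_smul_le _ _).trans (natDegree_wSymbol_le e l))
    refine lt_of_le_of_ne hle fun hQ => ?_
    have hQ0 : Q = 0 := leadingCoeff_eq_zero.1 (by rw [leadingCoeff, hQ, hQe])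
    exact he.pos.ne' (hQ ▸ hQ0 ▸ natDegree_zero)
  have hQspan := ih _ hQdeg (add_mem hP (Submodule.smul_mem _ _ hw)) rfl
  rw [show P = Q - P.leadingCoeff • wSymbol e l by simp [Q]]
  exact sub_mem hQspan (Submodule.smul_mem _ _ (Submodule.subset_span ⟨e, he, hel, rfl⟩))

noncomputable def symbolBracket (j k : ℤ) (f g : ℂ[X]) : ℂ[X] :=
  f.comp (X + C (k : ℂ)) * g - g.comp (X + C (j : ℂ)) * f

theorem DOp.mul_single_single (j k : ℤ) (f g : ℂ[X]) :
    DOp.mul (Finsupp.single j f) (Finsupp.single k g)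
      = Finsupp.single (j + k) (f.comp (X + C (k : ℂ)) * g) := by
  rw [DOp.mul, Finsupp.sum_single_index (by simp), Finsupp.sum_single_index (by simp)]

theorem DOp.lieb_single_single (j k : ℤ) (f g : ℂ[X]) :
    DOp.lieb (Finsupp.single j f) (Finsupp.single k g)
      = Finsupp.single (j + k) (symbolBracket j k f g) := by
  rw [DOp.lieb, mul_single_single, mul_single_single, add_comm k j, symbolBracket,
    Finsupp.single_sub]

theorem symbolBracket_mem_parabolicSymbols {j k : ℤ} {f g : ℂ[X]}
    (hf : f ∈ parabolicSymbols j) (hg : g ∈ parabolicSymbols k) :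
    symbolBracket j k f g ∈ parabolicSymbols (j + k) := by
  obtain ⟨hfσ, hfv⟩ := hf
  obtain ⟨hgσ, hgv⟩ := hg
  have hfσ' := eval_neg_sub_of_comp_eq_neg hfσ
  have hgσ' := eval_neg_sub_of_comp_eq_neg hgσ
  refine ⟨Polynomial.funext fun x => ?_, fun b h0 hb => ?_⟩
  · simp only [symbolBracket, eval_comp, eval_mul, eval_sub, eval_neg, eval_add, eval_X, eval_C]
    push_cast
    rw [show -x - (j + k + 1) + k = -x - (j + 1) by ring, hfσ',
      show -x - (j + k + 1) = -(x + j) - (k + 1) by ring, hgσ',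
      show -(x + j) - (k + 1) + j = -x - (k + 1) by ring, hgσ',
      show -(x + j) - (k + 1) = -(x + k) - (j + 1) by ring, hfσ']
    ring
  · -- each product has a factor evaluated at an integer in the vanishing range of `f` or `g`
    have hfk : f.eval ((b : ℂ) + k) * g.eval (b : ℂ) = 0 := by
      rcases lt_or_ge (b + k) 0 with h | h
      · rw [hgv b h0 h, mul_zero]
      · rw [← Int.cast_add, hfv _ h (by omega), zero_mul]
    have hgj : g.eval ((b : ℂ) + j) * f.eval (b : ℂ) = 0 := by
      rcases lt_or_ge (b + j) 0 with h | h
      · rw [hfv b h0 h, mul_zero]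
      · rw [← Int.cast_add, hgv _ h (by omega), zero_mul]
    simp only [symbolBracket, eval_sub, eval_mul, eval_comp, eval_add, eval_X, eval_C, hfk, hgj,
      sub_zero]

theorem single_mem_span_Wnk {l : ℤ} {P : ℂ[X]} (hP : P ∈ parabolicSymbols l) :
    Finsupp.single l P ∈ Submodule.span ℂ {a : DOp | ∃ (p : ℕ) (l : ℤ),
      Odd p ∧ 0 ≤ (p : ℤ) + l ∧ a = Wnk p l} := by
  have hmap := Submodule.mem_map_of_mem (f := Finsupp.lsingle (R := ℂ) l)
    (parabolicSymbols_le_span l hP)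
  rw [Submodule.map_span] at hmap
  refine Submodule.span_mono ?_ hmap
  rintro _ ⟨_, ⟨p, hp, hpl, rfl⟩, rfl⟩
  exact ⟨p, l, hp, hpl, rfl⟩

theorem vacuum_parabolic_closed_under_bracket_general
    (m : ℕ) (j : ℤ) (n : ℕ) (k : ℤ)
    (hmj : 0 ≤ (m : ℤ) + j) (hnk : 0 ≤ (n : ℤ) + k) :
    DOp.lieb (Wnk m j) (Wnk n k) ∈
      Submodule.span ℂ {a : DOp | ∃ (p : ℕ) (l : ℤ),
        Odd p ∧ 0 ≤ (p : ℤ) + l ∧ a = Wnk p l} := by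
  rw [Wnk_eq_single, Wnk_eq_single, DOp.lieb_single_single]
  exact single_mem_span_Wnk (symbolBracket_mem_parabolicSymbols
    (wSymbol_mem_parabolicSymbols hmj) (wSymbol_mem_parabolicSymbols hnk))

/-- the set `𝒫 = span{W^n_k : n + k ≥ 0, n odd positive}` is closed
under the Lie bracket of differential operators, i.e. `𝒫` is a Lie subalgebra
of `𝒟⁺`. -/
theorem vacuum_parabolic_closed_under_bracket
    (m : ℕ) (j : ℤ) (n : ℕ) (k : ℤ)
    (hm : Odd m) (hn : Odd n) (hmj : 0 ≤ (m : ℤ) + j) (hnk : 0 ≤ (n : ℤ) + k) :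
    DOp.lieb (Wnk m j) (Wnk n k) ∈
      Submodule.span ℂ {a : DOp | ∃ (p : ℕ) (l : ℤ),
        Odd p ∧ 0 ≤ (p : ℤ) + l ∧ a = Wnk p l} :=
  vacuum_parabolic_closed_under_bracket_general m j n k hmj hnk
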